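/- arXiv:2405.08027 — 4 statements merged into one kernel-verified Lean document; each statement's English description precedes it below -/
import Mathlib

section
/- Let N, K > 0 be real numbers, and for each integer t ≥ 1 define weights A_t = (tN + (t−1)K)/((t+1)N + tK), B_t = N/((t+1)N + tK), C_t = K/((t+1)N + tK). Let q̄₀ ∈ ℝ and let (q̄_t), (a_t) be real sequences. Fix an integer t ≥ 2 and suppose q̄_t = A_t·q̄_{t−1} + B_t·a_{t−1} + C_t·q̄₀ and q̄_{t−1} = A_{t−1}·q̄_{t−2} + B_{t−1}·a_{t−2} + C_{t−1}·q̄₀. If q̄_{t−1} > q̄_{t−2} and a_{t−1} > a_{t−2}, then q̄_t > q̄_{t−1}. -/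
/-! If both weight triples sum to one and the new-data weights shrink by a common factor,
`B = r B'` and `C = r C'` (here `r = (tN + (t-1)K) / ((t+1)N + tK)`), then subtracting the two
recursions makes the `q̄₀` terms cancel: `x' - x = r (A' (x - y) + B' (a - b))`. As `r > 0`,
`A' ≥ 0` and `B' > 0`, an increase of both the qualification and the acceptance rate at the
previous round therefore propagates to the next. -/

theorem sub_eq_of_affine_recursion {A B C A' B' C' r x' x y a b c : ℝ}
    (hsum : A + B + C = 1) (hsum' : A' + B' + C' = 1) (hB : B = r * B') (hC : C = r * C')
    (hx' : x' = A * x + B * a + C * c) (hx : x = A' * y + B' * b + C' * c) :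
    x' - x = r * (A' * (x - y) + B' * (a - b)) := by
  subst hB hC
  linear_combination hx' + x * hsum - r * x * hsum' - r * hx

theorem lt_of_affine_recursion {A B C A' B' C' r x' x y a b c : ℝ}
    (hsum : A + B + C = 1) (hsum' : A' + B' + C' = 1) (hB : B = r * B') (hC : C = r * C')
    (hx' : x' = A * x + B * a + C * c) (hx : x = A' * y + B' * b + C' * c)
    (hr : 0 < r) (hA' : 0 ≤ A') (hB' : 0 < B') (hxy : y < x) (hab : b < a) : x < x' := by
  have hstep : 0 < r * (A' * (x - y) + B' * (a - b)) :=
    mul_pos hr (add_pos_of_nonneg_of_pos (mul_nonneg hA' (sub_pos.2 hxy).le)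
      (mul_pos hB' (sub_pos.2 hab)))
  linarith [sub_eq_of_affine_recursion hsum hsum' hB hC hx' hx]

/-- induction step in the proof of Theorem 1 (evolution of acceptance rate).
If `q̄_t = A_t q̄_{t-1} + B_t a_{t-1} + C_t q̄₀` and similarly at `t-1`, with
`q̄_{t-1} > q̄_{t-2}` and `a_{t-1} > a_{t-2}`, then `q̄_t > q̄_{t-1}`. -/
theorem stmt0 (N K : ℝ) (hN : 0 < N) (hK : 0 < K)
    (qbar a : ℕ → ℝ) (qbar0 : ℝ) (t : ℕ) (ht : 2 ≤ t)
    (hrec_t : qbar t =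
      (((t : ℝ) * N + ((t : ℝ) - 1) * K) / (((t : ℝ) + 1) * N + (t : ℝ) * K)) * qbar (t - 1)
      + (N / (((t : ℝ) + 1) * N + (t : ℝ) * K)) * a (t - 1)
      + (K / (((t : ℝ) + 1) * N + (t : ℝ) * K)) * qbar0)
    (hrec_t1 : qbar (t - 1) =
      ((((t : ℝ) - 1) * N + ((t : ℝ) - 2) * K) / ((t : ℝ) * N + ((t : ℝ) - 1) * K)) * qbar (t - 2)
      + (N / ((t : ℝ) * N + ((t : ℝ) - 1) * K)) * a (t - 2)
      + (K / ((t : ℝ) * N + ((t : ℝ) - 1) * K)) * qbar0)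
    (hq : qbar (t - 1) > qbar (t - 2))
    (ha : a (t - 1) > a (t - 2)) :
    qbar t > qbar (t - 1) := by
  have ht' : (2 : ℝ) ≤ t := by exact_mod_cast ht
  set D := ((t : ℝ) + 1) * N + (t : ℝ) * K
  set D' := (t : ℝ) * N + ((t : ℝ) - 1) * K
  have hD : 0 < D := by positivity
  have hD' : 0 < D' := by nlinarith
  have hnum' : 0 ≤ ((t : ℝ) - 1) * N + ((t : ℝ) - 2) * K := by nlinarith
  refine lt_of_affine_recursion (r := D' / D) ?_ ?_ ?_ ?_ hrec_t hrec_t1 (by positivity)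
    (by positivity) (by positivity) hq ha
  · field_simp; ring
  · field_simp; ring
  · field_simp
  · field_simp
end

section
/- Let N, K > 0 be real numbers, and for each integer t ≥ 1 define A_t = (tN + (t−1)K)/((t+1)N + tK), B_t = N/((t+1)N + tK), C_t = K/((t+1)N + tK). Let q̄₀ ∈ ℝ, let a : ℕ → ℝ be strictly increasing, and let q̄ : ℕ → ℝ satisfy q̄(0) = q̄₀ and q̄(t) = A_t·q̄(t−1) + B_t·a(t−1) + C_t·q̄₀ for all t ≥ 1. If a(0) ≥ q̄₀, then q̄(1) ≥ q̄(0) and q̄(t) > q̄(t−1) for every t ≥ 2. -/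
/-!
With `D_t = (t+1)N + tK` and `E_t = N (a_t - q̄_t) + K (q̄₀ - q̄_t)`, the recursion says exactly
`q̄_{t+1} - q̄_t = E_t / D_{t+1}`. Feeding this back into `E` gives the affine recursion
`E_{t+1} = (1 - (N+K)/D_{t+1}) E_t + N (a_{t+1} - a_t)`, whose coefficient is nonnegative because
`D_{t+1} ≥ N + K` and whose forcing term is positive because `a` is strictly increasing.
So `E_0 = N (a_0 - q̄₀) ≥ 0` propagates to `E_t > 0` for all `t ≥ 1`.
-/

theorem pos_succ_of_affine_step {e c d : ℕ → ℝ} (he0 : 0 ≤ e 0) (hc : ∀ n, 0 ≤ c n)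
    (hd : ∀ n, 0 < d n) (hstep : ∀ n, e (n + 1) = c n * e n + d n) (n : ℕ) :
    0 < e (n + 1) := by
  induction n with
  | zero => rw [hstep]; nlinarith [hc 0, hd 0]
  | succ n ih => rw [hstep]; nlinarith [hc (n + 1), hd (n + 1)]

namespace Retraining

def denom (N K : ℝ) (t : ℕ) : ℝ := ((t : ℝ) + 1) * N + (t : ℝ) * K

def drift (N K q0 : ℝ) (a q : ℕ → ℝ) (t : ℕ) : ℝ := N * (a t - q t) + K * (q0 - q t)

variable {N K q0 : ℝ} {a q : ℕ → ℝ}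

theorem denom_pos (hN : 0 < N) (hK : 0 ≤ K) (t : ℕ) : 0 < denom N K t := by
  unfold denom
  positivity

theorem add_le_denom_succ (hN : 0 ≤ N) (hK : 0 ≤ K) (n : ℕ) : N + K ≤ denom N K (n + 1) := by
  unfold denom
  push_cast
  nlinarith [(n.cast_nonneg : (0 : ℝ) ≤ n)]

theorem sub_pred_eq_drift_div {t : ℕ} (hD : denom N K t ≠ 0)
    (h : q t = ((t * N + (t - 1) * K) / denom N K t) * q (t - 1)
      + (N / denom N K t) * a (t - 1) + (K / denom N K t) * q0) :
    q t - q (t - 1) = drift N K q0 a q (t - 1) / denom N K t := by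
  have hnum : (t * N + (t - 1) * K : ℝ) = denom N K t - N - K := by
    unfold denom
    ring
  rw [h, hnum]
  unfold drift
  field_simp
  ring

theorem drift_succ {n : ℕ} (h : q (n + 1) - q n = drift N K q0 a q n / denom N K (n + 1)) :
    drift N K q0 a q (n + 1) =
      (1 - (N + K) / denom N K (n + 1)) * drift N K q0 a q n + N * (a (n + 1) - a n) := by
  have hdiff : drift N K q0 a q (n + 1) =
      drift N K q0 a q n + N * (a (n + 1) - a n) - (N + K) * (q (n + 1) - q n) := by
    unfold drift
    ring
  rw [hdiff, h]
  ring

end Retraining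

open Retraining in
/-- arithmetic skeleton of the lemma used to prove Theorem 1.
With the recursion `q̄_t = A_t q̄_{t-1} + B_t a_{t-1} + C_t q̄₀`, `a` strictly
increasing and `a 0 ≥ q̄₀`, we get `q̄ 1 ≥ q̄ 0` and `q̄ t > q̄ (t-1)` for `t ≥ 2`. -/
theorem stmt1 (N K : ℝ) (hN : 0 < N) (hK : 0 < K)
    (qbar0 : ℝ) (a qbar : ℕ → ℝ) (ha : StrictMono a)
    (h0 : qbar 0 = qbar0)
    (hrec : ∀ t : ℕ, 1 ≤ t → qbar t =
      (((t : ℝ) * N + ((t : ℝ) - 1) * K) / (((t : ℝ) + 1) * N + (t : ℝ) * K)) * qbar (t - 1)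
      + (N / (((t : ℝ) + 1) * N + (t : ℝ) * K)) * a (t - 1)
      + (K / (((t : ℝ) + 1) * N + (t : ℝ) * K)) * qbar0)
    (ha0 : a 0 ≥ qbar0) :
    qbar 1 ≥ qbar 0 ∧ ∀ t : ℕ, 2 ≤ t → qbar t > qbar (t - 1) := by
  have hD : ∀ t, 0 < denom N K t := denom_pos hN hK.le
  have hinc (n : ℕ) : qbar (n + 1) - qbar n = drift N K qbar0 a qbar n / denom N K (n + 1) :=
    sub_pred_eq_drift_div (hD (n + 1)).ne' (hrec (n + 1) (Nat.le_add_left 1 n))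
  have hdrift0 : 0 ≤ drift N K qbar0 a qbar 0 := by
    simp only [drift, h0, sub_self, mul_zero, add_zero]
    exact mul_nonneg hN.le (sub_nonneg.2 ha0)
  have hdrift : ∀ n, 0 < drift N K qbar0 a qbar (n + 1) :=
    pos_succ_of_affine_step hdrift0
      (fun n => sub_nonneg.2 ((div_le_one (hD (n + 1))).2 (add_le_denom_succ hN.le hK.le n)))
      (fun n => mul_pos hN (sub_pos.2 (ha n.lt_succ_self)))
      (fun n => drift_succ (hinc n))
  refine ⟨sub_nonneg.1 ((hinc 0).symm ▸ div_nonneg hdrift0 (hD 1).le), fun t ht => ?_⟩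
  obtain ⟨n, rfl⟩ : ∃ n, t = n + 2 := ⟨t - 2, by omega⟩
  exact sub_pos.1 ((hinc (n + 1)).symm ▸ div_pos (hdrift n) (hD (n + 2)))
end

section
/- Let E be a real inner product space, w ∈ E with w ≠ 0, θ ∈ ℝ, b > 0, and x ∈ E. Define f : E → ℝ by f(z) = 1 if ⟪w, z⟫ ≥ θ and f(z) = 0 otherwise, and let d(x) = max(θ − ⟪w, x⟫, 0)/‖w‖ be the distance from x to the acceptance halfspace. Then the agent's optimal utility satisfies sup_{z ∈ E} ( f(z) − b·‖z − x‖² ) = max( 1 − b·d(x)², 0 ). -/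
/-! The agent either stays put (utility `0`, or `1` if already accepted) or moves to the nearest
accepted point, the orthogonal projection of `x` onto the halfspace `θ ≤ ⟪w, z⟫`, at distance
`d(x)`; any other accepted point is at least as far away, hence only costlier. -/

open RealInnerProductSpace

section NearestPoint

variable {α : Type*} [PseudoMetricSpace α] (P : α → Prop) [DecidablePred P]

lemma bddAbove_range_ite_sub_mul_dist_sq {b : ℝ} (hb : 0 ≤ b) (x : α) :
    BddAbove (Set.range fun z => (if P z then (1 : ℝ) else 0) - b * dist z x ^ 2) := by
  refine ⟨1, ?_⟩
  rintro _ ⟨z, rfl⟩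
  dsimp only
  have : 0 ≤ b * dist z x ^ 2 := by positivity
  split_ifs <;> linarith

theorem iSup_ite_sub_mul_dist_sq_eq {x p : α} {r : ℝ} (hp : P p) (hpx : dist p x = r)
    (hmin : ∀ z, P z → r ≤ dist z x) {b : ℝ} (hb : 0 ≤ b) :
    ⨆ z, ((if P z then (1 : ℝ) else 0) - b * dist z x ^ 2) = max (1 - b * r ^ 2) 0 := by
  have hr : 0 ≤ r := hpx ▸ dist_nonneg
  have : Nonempty α := ⟨x⟩
  have hbdd := bddAbove_range_ite_sub_mul_dist_sq P hb x
  apply le_antisymm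
  · refine ciSup_le fun z => ?_
    by_cases hz : P z
    · have hrz : r ^ 2 ≤ dist z x ^ 2 := pow_le_pow_left₀ hr (hmin z hz) 2
      rw [if_pos hz]
      exact le_max_of_le_left (by nlinarith)
    · rw [if_neg hz]
      exact le_max_of_le_right (by nlinarith [sq_nonneg (dist z x)])
  · refine max_le ?_ ?_
    · simpa [hp, hpx] using le_ciSup hbdd p
    · refine le_trans ?_ (le_ciSup hbdd x)
      split_ifs <;> simp

end NearestPoint

section Halfspace

variable {E : Type*} [NormedAddCommGroup E] [InnerProductSpace ℝ E]

/-- The distance `d(x)` from `x` to the halfspace `{z | θ ≤ ⟪w, z⟫}`. -/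
noncomputable def halfspaceDist (w : E) (θ : ℝ) (x : E) : ℝ := max (θ - ⟪w, x⟫) 0 / ‖w‖

lemma halfspaceDist_le_dist {w : E} {θ : ℝ} {x z : E} (hz : θ ≤ ⟪w, z⟫) :
    halfspaceDist w θ x ≤ dist z x := by
  have hcs : ⟪w, z - x⟫ ≤ ‖w‖ * dist z x := dist_eq_norm z x ▸ real_inner_le_norm w (z - x)
  refine div_le_of_le_mul₀ (norm_nonneg w) dist_nonneg (max_le ?_ (by positivity))
  rw [inner_sub_right] at hcs
  linarith

lemma exists_dist_eq_halfspaceDist {w : E} (hw : w ≠ 0) (θ : ℝ) (x : E) :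
    ∃ p, θ ≤ ⟪w, p⟫ ∧ dist p x = halfspaceDist w θ x := by
  have hw' : 0 < ‖w‖ := norm_pos_iff.mpr hw
  refine ⟨x + (max (θ - ⟪w, x⟫) 0 / ‖w‖ ^ 2) • w, ?_, ?_⟩
  · rw [inner_add_right, inner_smul_right, real_inner_self_eq_norm_sq,
      div_mul_cancel₀ _ (by positivity)]
    linarith [le_max_left (θ - ⟪w, x⟫) 0]
  · rw [dist_eq_norm, add_sub_cancel_left, norm_smul, Real.norm_of_nonneg (by positivity),
      halfspaceDist]
    field_simp

end Halfspace

/-- the strategic agent's optimal utility against a linear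
classifier `f(z) = 1(⟪w, z⟫ ≥ θ)` with quadratic cost `b ‖z - x‖²`:
`sup_z (f z - b ‖z - x‖²) = max (1 - b d(x)²) 0`, where
`d(x) = max (θ - ⟪w, x⟫) 0 / ‖w‖` is the distance to the acceptance halfspace. -/
theorem stmt7 {E : Type*} [NormedAddCommGroup E] [InnerProductSpace ℝ E]
    (w : E) (hw : w ≠ 0) (θ b : ℝ) (hb : 0 < b) (x : E) :
    (⨆ z : E, ((if (inner ℝ w z : ℝ) ≥ θ then (1 : ℝ) else 0) - b * ‖z - x‖ ^ 2)) =
      max (1 - b * (max (θ - (inner ℝ w x : ℝ)) 0 / ‖w‖) ^ 2) 0 := by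
  obtain ⟨p, hp, hpx⟩ := exists_dist_eq_halfspaceDist hw θ x
  simp_rw [← dist_eq_norm]
  exact iSup_ite_sub_mul_dist_sq_eq (fun z => θ ≤ ⟪w, z⟫) hp hpx
    (fun _ => halfspaceDist_le_dist) hb.le
end

section
/- Let E be a real inner product space, w ∈ E with w ≠ 0, θ ∈ ℝ, b > 0, and x ∈ E with ⟪w, x⟫ < θ (a rejected agent). Define f : E → ℝ by f(z) = 1 if ⟪w, z⟫ ≥ θ and 0 otherwise, and let d(x) = (θ − ⟪w, x⟫)/‖w‖ > 0. If d(x) ≤ 1/√b, then the supremum of z ↦ f(z) − b·‖z − x‖² over E equals 1 − b·d(x)² ≥ 0 and is attained at the boundary point z* = x + ((θ − ⟪w, x⟫)/‖w‖²)·w, which satisfies ⟪w, z*⟫ = θ. If d(x) > 1/√b, then the supremum equals 0 and is attained at z = x. -/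
/-!
An accepted point `z` satisfies `θ - ⟪w, x⟫ ≤ ⟪w, z - x⟫ ≤ ‖w‖ ‖z - x‖` by Cauchy–Schwarz, so it is
at distance at least `d = (θ - ⟪w, x⟫) / ‖w‖` from `x`; the orthogonal projection `z*` of `x` onto
the hyperplane `⟪w, ·⟫ = θ` is accepted and at distance exactly `d`. Hence the agent's utility is
at most `1 - b d²` on accepted points and at most `0` on rejected ones, with equality at `z*` and at
`x` respectively, so its supremum is `max (1 - b d²) 0`. The threshold `d ≤ 1 / √b` is `b d² ≤ 1`.
-/

open scoped RealInnerProductSpace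

noncomputable section

variable {E : Type*} [NormedAddCommGroup E] [InnerProductSpace ℝ E]

def agentUtility (w : E) (θ b : ℝ) (x z : E) : ℝ :=
  (if ⟪w, z⟫ ≥ θ then (1 : ℝ) else 0) - b * ‖z - x‖ ^ 2

/-- The point of the hyperplane `⟪w, ·⟫ = θ` closest to `x`. -/
def boundaryProjection (w : E) (θ : ℝ) (x : E) : E :=
  x + ((θ - ⟪w, x⟫) / ‖w‖ ^ 2) • w

theorem div_norm_le_norm_sub_of_le_inner {w x z : E} {θ : ℝ} (hz : θ ≤ ⟪w, z⟫) :
    (θ - ⟪w, x⟫) / ‖w‖ ≤ ‖z - x‖ := by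
  rcases eq_or_ne w 0 with rfl | hw
  · simp
  have hgap : θ - ⟪w, x⟫ ≤ ⟪w, z - x⟫ := by rw [inner_sub_right]; linarith
  rw [div_le_iff₀ (norm_pos_iff.mpr hw), mul_comm]
  exact hgap.trans (real_inner_le_norm w (z - x))

theorem inner_boundaryProjection {w : E} (hw : w ≠ 0) (θ : ℝ) (x : E) :
    ⟪w, boundaryProjection w θ x⟫ = θ := by
  have : ‖w‖ ≠ 0 := norm_ne_zero_iff.mpr hw
  rw [boundaryProjection, inner_add_right, real_inner_smul_right, real_inner_self_eq_norm_sq]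
  field_simp
  ring

theorem norm_boundaryProjection_sub (w : E) (θ : ℝ) (x : E) :
    ‖boundaryProjection w θ x - x‖ = |θ - ⟪w, x⟫| / ‖w‖ := by
  rcases eq_or_ne w 0 with rfl | hw
  · simp [boundaryProjection]
  have : ‖w‖ ≠ 0 := norm_ne_zero_iff.mpr hw
  rw [boundaryProjection, add_sub_cancel_left, norm_smul, Real.norm_eq_abs, abs_div,
    abs_of_nonneg (sq_nonneg ‖w‖)]
  field_simp

theorem agentUtility_le_max {w x : E} {θ b : ℝ} (hb : 0 ≤ b) (hx : ⟪w, x⟫ ≤ θ) (z : E) :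
    agentUtility w θ b x z ≤ max (1 - b * ((θ - ⟪w, x⟫) / ‖w‖) ^ 2) 0 := by
  unfold agentUtility
  split_ifs with hz
  · refine le_max_of_le_left (sub_le_sub_left (mul_le_mul_of_nonneg_left ?_ hb) 1)
    exact pow_le_pow_left₀ (div_nonneg (sub_nonneg.mpr hx) (norm_nonneg w))
      (div_norm_le_norm_sub_of_le_inner hz) 2
  · exact le_max_of_le_right (sub_nonpos.mpr (by positivity))

theorem agentUtility_boundaryProjection {w : E} (hw : w ≠ 0) {θ : ℝ} (b : ℝ) {x : E}
    (hx : ⟪w, x⟫ < θ) :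
    agentUtility w θ b x (boundaryProjection w θ x) = 1 - b * ((θ - ⟪w, x⟫) / ‖w‖) ^ 2 := by
  rw [agentUtility, if_pos (inner_boundaryProjection hw θ x).ge, norm_boundaryProjection_sub,
    abs_of_pos (sub_pos.mpr hx)]

theorem agentUtility_self_of_inner_lt {w x : E} {θ : ℝ} (b : ℝ) (hx : ⟪w, x⟫ < θ) :
    agentUtility w θ b x x = 0 := by
  simp [agentUtility, hx]

theorem iSup_agentUtility {w : E} (hw : w ≠ 0) {θ b : ℝ} (hb : 0 ≤ b) {x : E}
    (hx : ⟪w, x⟫ < θ) :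
    ⨆ z, agentUtility w θ b x z = max (1 - b * ((θ - ⟪w, x⟫) / ‖w‖) ^ 2) 0 := by
  have hbdd : BddAbove (Set.range (agentUtility w θ b x)) :=
    ⟨_, Set.forall_mem_range.mpr (agentUtility_le_max hb hx.le)⟩
  refine le_antisymm (ciSup_le (agentUtility_le_max hb hx.le)) (max_le ?_ ?_)
  · exact (agentUtility_boundaryProjection hw b hx).symm.le.trans
      (le_ciSup hbdd (boundaryProjection w θ x))
  · exact (agentUtility_self_of_inner_lt b hx).symm.le.trans (le_ciSup hbdd x)

theorem le_one_div_sqrt_iff {b d : ℝ} (hb : 0 < b) (hd : 0 ≤ d) :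
    d ≤ 1 / √b ↔ b * d ^ 2 ≤ 1 := by
  have hroot : d * √b = √(b * d ^ 2) := by rw [Real.sqrt_mul hb.le, Real.sqrt_sq hd, mul_comm]
  rw [le_div_iff₀ (Real.sqrt_pos.mpr hb), hroot, Real.sqrt_le_one]

end

/-- best response of a rejected agent (`⟪w, x⟫ < θ`) against the
linear classifier `f(z) = 1(⟪w, z⟫ ≥ θ)` with quadratic cost `b ‖z - x‖²`.
With `d(x) = (θ - ⟪w, x⟫)/‖w‖ > 0`: if `d(x) ≤ 1/√b` the supremum of
`z ↦ f z - b ‖z - x‖²` equals `1 - b d(x)² ≥ 0` and is attained at the boundary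
point `z* = x + ((θ - ⟪w, x⟫)/‖w‖²) • w`, which satisfies `⟪w, z*⟫ = θ`; if
`d(x) > 1/√b` the supremum equals `0` and is attained at `z = x`. -/
theorem stmt8 {E : Type*} [NormedAddCommGroup E] [InnerProductSpace ℝ E]
    (w : E) (hw : w ≠ 0) (θ b : ℝ) (hb : 0 < b) (x : E)
    (hx : (inner ℝ w x : ℝ) < θ) :
    (0 < (θ - (inner ℝ w x : ℝ)) / ‖w‖) ∧
    ((θ - (inner ℝ w x : ℝ)) / ‖w‖ ≤ 1 / Real.sqrt b →
      (⨆ z : E, ((if (inner ℝ w z : ℝ) ≥ θ then (1 : ℝ) else 0) - b * ‖z - x‖ ^ 2)) =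
          1 - b * ((θ - (inner ℝ w x : ℝ)) / ‖w‖) ^ 2 ∧
        0 ≤ 1 - b * ((θ - (inner ℝ w x : ℝ)) / ‖w‖) ^ 2 ∧
        ((if (inner ℝ w (x + ((θ - (inner ℝ w x : ℝ)) / ‖w‖ ^ 2) • w) : ℝ) ≥ θ then (1 : ℝ) else 0)
            - b * ‖(x + ((θ - (inner ℝ w x : ℝ)) / ‖w‖ ^ 2) • w) - x‖ ^ 2) =
          1 - b * ((θ - (inner ℝ w x : ℝ)) / ‖w‖) ^ 2 ∧
        (inner ℝ w (x + ((θ - (inner ℝ w x : ℝ)) / ‖w‖ ^ 2) • w) : ℝ) = θ) ∧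
    ((θ - (inner ℝ w x : ℝ)) / ‖w‖ > 1 / Real.sqrt b →
      (⨆ z : E, ((if (inner ℝ w z : ℝ) ≥ θ then (1 : ℝ) else 0) - b * ‖z - x‖ ^ 2)) = 0 ∧
        ((if (inner ℝ w x : ℝ) ≥ θ then (1 : ℝ) else 0) - b * ‖x - x‖ ^ 2) = 0) := by
  have hd : 0 < (θ - ⟪w, x⟫) / ‖w‖ := div_pos (sub_pos.mpr hx) (norm_pos_iff.mpr hw)
  have hsup := iSup_agentUtility hw hb.le hx
  unfold agentUtility at hsup
  refine ⟨hd, fun hle => ?_, fun hgt => ?_⟩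
  · have hcost := (le_one_div_sqrt_iff hb hd.le).mp hle
    rw [hsup, max_eq_left (sub_nonneg.mpr hcost)]
    exact ⟨rfl, sub_nonneg.mpr hcost, agentUtility_boundaryProjection hw b hx,
      inner_boundaryProjection hw θ x⟩
  · have hcost := (lt_iff_lt_of_le_iff_le (le_one_div_sqrt_iff hb hd.le)).mp hgt
    rw [hsup, max_eq_right (sub_nonpos.mpr hcost.le)]
    exact ⟨rfl, agentUtility_self_of_inner_lt b hx⟩
end
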